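/- arXiv:1904.01473 — 2 statements merged into one kernel-verified Lean document; each statement's English description precedes it below -/
import Mathlib

section
/- Let P* be the input distribution with P*(0) = 0 and P*(x) = 1/(r−1) for x ≠ 0. Then the per-input information of the input 0 is dominated by that of every nonzero input: I(0;P*,W) ≤ I(x;P*,W) for every x ≠ 0 (Karush–Kuhn–Tucker optimality check for P*). -/
open Real BigOperators Finset

/-- Entropy of a finite probability vector, with the convention `0 * log 0 = 0`
(automatic since `Real.log 0 = 0`). -/
noncomputable def ent {n : ℕ} (p : Fin n → ℝ) : ℝ := -∑ y, p y * Real.log (p y)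

/-- `Q` is a probability distribution on `Fin n`. -/
def IsProbDist {n : ℕ} (Q : Fin n → ℝ) : Prop := (∀ x, 0 ≤ Q x) ∧ ∑ x, Q x = 1

/-- Output distribution `(QW)(y) = ∑ x, Q x * W x y`. -/
noncomputable def outDist {r s : ℕ} (Q : Fin r → ℝ) (W : Fin r → Fin s → ℝ) (y : Fin s) : ℝ :=
  ∑ x, Q x * W x y

/-- Mutual information `I(Q;W)`; terms with `Q x * W x y = 0` vanish automatically. -/
noncomputable def mutInfo {r s : ℕ} (Q : Fin r → ℝ) (W : Fin r → Fin s → ℝ) : ℝ :=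
  ∑ x, ∑ y, Q x * W x y * Real.log (W x y / outDist Q W y)

/-- Per-input information `I(x;Q,W)`. -/
noncomputable def perInput {r s : ℕ} (x : Fin r) (Q : Fin r → ℝ) (W : Fin r → Fin s → ℝ) : ℝ :=
  ∑ y, W x y * Real.log (W x y / outDist Q W y)

/-- Channel assumptions: `W` is a transition matrix on inputs `Fin (r+3)` (so `r ≥ 3`)
and outputs `Fin (s+2)` (so `s ≥ 2`), with (i) uniform row at input `0`, (ii) the rows of
nonzero inputs are permutations of the row of input `1`, and (iii) the column sums over
nonzero inputs are constant (weak symmetry of the nonzero-input sub-channel). -/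
def PTTOneWay {r s : ℕ} (W : Fin (r + 3) → Fin (s + 2) → ℝ) : Prop :=
  (∀ x y, 0 ≤ W x y) ∧
  (∀ x, ∑ y, W x y = 1) ∧
  (∀ y, W 0 y = 1 / ((s : ℝ) + 2)) ∧
  (∀ x : Fin (r + 3), x ≠ 0 → ∃ σ : Equiv.Perm (Fin (s + 2)), ∀ y, W x y = W 1 (σ y)) ∧
  (∀ y y' : Fin (s + 2),
    ∑ x ∈ Finset.univ.filter (fun x => x ≠ (0 : Fin (r + 3))), W x y =
    ∑ x ∈ Finset.univ.filter (fun x => x ≠ (0 : Fin (r + 3))), W x y')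

/-!
Under `P*` the output distribution is uniform: the nonzero-input columns all have the same
sum, which counting entries forces to be (number of nonzero inputs) / (number of outputs).
Hence the uniform row of input `0` coincides with the output distribution and
`I(0; P*, W) = 0`, while every `I(x; P*, W)` is a Kullback–Leibler divergence, nonnegative by
Gibbs' inequality.
-/

open InformationTheory

lemma sub_le_mul_log_div {p q : ℝ} (hp : 0 ≤ p) (hq : 0 < q) : p - q ≤ p * log (p / q) := by
  have hkl : 0 ≤ q * klFun (p / q) := mul_nonneg hq.le (klFun_nonneg (div_nonneg hp hq.le))
  have hexpand : q * klFun (p / q) = p * log (p / q) + q - p := by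
    rw [klFun_apply]
    field_simp
  linarith

lemma sum_mul_log_div_nonneg {ι : Type*} [Fintype ι] {p q : ι → ℝ} (hp : ∀ i, 0 ≤ p i)
    (hq : ∀ i, 0 < q i) (hmass : ∑ i, q i ≤ ∑ i, p i) : 0 ≤ ∑ i, p i * log (p i / q i) :=
  calc 0 ≤ ∑ i, (p i - q i) := by rw [Finset.sum_sub_distrib]; linarith
    _ ≤ ∑ i, p i * log (p i / q i) :=
      Finset.sum_le_sum fun i _ => sub_le_mul_log_div (hp i) (hq i)

lemma sum_eq_card_div_card_of_sum_const {ι κ : Type*} [Fintype κ] (S : Finset ι)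
    (W : ι → κ → ℝ) (hrow : ∀ x ∈ S, ∑ y, W x y = 1)
    (hcol : ∀ y y', ∑ x ∈ S, W x y = ∑ x ∈ S, W x y') (y : κ) :
    ∑ x ∈ S, W x y = #S / Fintype.card κ := by
  have hκ : (0 : ℝ) < Fintype.card κ := Nat.cast_pos.2 (Fintype.card_pos_iff.2 ⟨y⟩)
  have htotal : Fintype.card κ * ∑ x ∈ S, W x y = #S :=
    calc Fintype.card κ * ∑ x ∈ S, W x y = ∑ y', ∑ x ∈ S, W x y' := by
          simp [hcol _ y]
      _ = ∑ x ∈ S, ∑ y', W x y' := Finset.sum_comm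
      _ = #S := by simp [Finset.sum_congr rfl hrow]
  rw [eq_div_iff hκ.ne', ← htotal, mul_comm]

lemma outDist_eq_mul_sum_filter_ne {r s : ℕ} (x₀ : Fin r) (c : ℝ) (W : Fin r → Fin s → ℝ)
    (y : Fin s) :
    outDist (fun x => if x = x₀ then 0 else c) W y = c * ∑ x ∈ univ.filter (· ≠ x₀), W x y := by
  rw [outDist, Finset.mul_sum, Finset.sum_filter]
  refine Finset.sum_congr rfl fun x _ => ?_
  split_ifs <;> simp_all

lemma perInput_eq_zero_of_row_eq_outDist {r s : ℕ} {x : Fin r} {Q : Fin r → ℝ}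
    {W : Fin r → Fin s → ℝ} (h : ∀ y, W x y = outDist Q W y) : perInput x Q W = 0 :=
  Finset.sum_eq_zero fun y _ => by
    rw [h y]
    rcases eq_or_ne (outDist Q W y) 0 with h0 | h0 <;> simp [h0]

lemma perInput_nonneg {r s : ℕ} {x : Fin r} {Q : Fin r → ℝ} {W : Fin r → Fin s → ℝ}
    (hW : ∀ y, 0 ≤ W x y) (hQW : ∀ y, 0 < outDist Q W y)
    (hmass : ∑ y, outDist Q W y ≤ ∑ y, W x y) : 0 ≤ perInput x Q W :=
  sum_mul_log_div_nonneg hW hQW hmass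

lemma PTTOneWay.outDist_eq {r s : ℕ} {W : Fin (r + 3) → Fin (s + 2) → ℝ} (hW : PTTOneWay W)
    (y : Fin (s + 2)) :
    outDist (fun x : Fin (r + 3) => if x = 0 then (0 : ℝ) else ((r : ℝ) + 2)⁻¹) W y =
      1 / ((s : ℝ) + 2) := by
  obtain ⟨-, hrow, -, -, hcol⟩ := hW
  have hcard : #(univ.filter (· ≠ (0 : Fin (r + 3)))) = r + 2 := by
    rw [Finset.filter_ne', Finset.card_erase_of_mem (Finset.mem_univ _)]
    simp
  rw [outDist_eq_mul_sum_filter_ne,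
    sum_eq_card_div_card_of_sum_const _ W (fun x _ => hrow x) hcol, hcard, Fintype.card_fin]
  push_cast
  field_simp

/-- KKT optimality check: under `P*` (uniform on nonzero inputs), the per-input
information of input `0` is dominated by that of every nonzero input. -/
theorem stmt5 (r s : ℕ) (W : Fin (r + 3) → Fin (s + 2) → ℝ) (hW : PTTOneWay W) :
    ∀ x : Fin (r + 3), x ≠ 0 →
      perInput 0 (fun x' : Fin (r + 3) => if x' = 0 then (0 : ℝ) else ((r : ℝ) + 2)⁻¹) W ≤
      perInput x (fun x' : Fin (r + 3) => if x' = 0 then (0 : ℝ) else ((r : ℝ) + 2)⁻¹) W := by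
  intro x _
  have hout := hW.outDist_eq
  obtain ⟨hnonneg, hrow, hunif, -, -⟩ := hW
  rw [perInput_eq_zero_of_row_eq_outDist fun y => (hunif y).trans (hout y).symm]
  refine perInput_nonneg (hnonneg x) (fun y => hout y ▸ by positivity) ?_
  simp only [hout, hrow, Finset.sum_const, Finset.card_univ, Fintype.card_fin, nsmul_eq_mul]
  push_cast
  field_simp
  exact le_rfl
end

section
/- For every α with 0 ≤ α ≤ 1, let P_α be the input distribution with P_α(0) = α and P_α(x) = (1−α)/(r−1) for x ≠ 0. Then I(P_α;W) = (1−α)·C*, where C* = log s − H(W(1,·)). -/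
open Real BigOperators Finset

/-! The output distribution of `P_α` is uniform: input `0` contributes a uniform row, and the
nonzero inputs, weighted uniformly, contribute their constant column sums. Against a uniform
output every input `x` carries `log s − H(W(x,·))`, which is `0` for the uniform row and `C*`
for every permuted copy of `W(1,·)`. -/

theorem ent_comp_perm {n : ℕ} (p : Fin n → ℝ) (σ : Equiv.Perm (Fin n)) :
    ent (fun y => p (σ y)) = ent p :=
  congrArg Neg.neg (Equiv.sum_comp σ fun y => p y * Real.log (p y))

theorem ent_uniform (n : ℕ) : ent (fun _ : Fin n => 1 / (n : ℝ)) = Real.log n := by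
  rcases eq_or_ne n 0 with rfl | hn
  · simp [ent]
  · have hn' : (n : ℝ) ≠ 0 := Nat.cast_ne_zero.mpr hn
    simp only [ent, sum_const, card_univ, Fintype.card_fin, nsmul_eq_mul, one_div, log_inv]
    field_simp

theorem mutInfo_eq_sum_mul_perInput {r s : ℕ} (Q : Fin r → ℝ) (W : Fin r → Fin s → ℝ) :
    mutInfo Q W = ∑ x, Q x * perInput x Q W := by
  simp only [mutInfo, perInput, mul_sum, mul_assoc]

theorem perInput_of_outDist_eq_const {r s : ℕ} {Q : Fin r → ℝ} {W : Fin r → Fin s → ℝ}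
    {x : Fin r} {c : ℝ} (hrow : ∑ y, W x y = 1) (hout : ∀ y, outDist Q W y = c) (hc : c ≠ 0) :
    perInput x Q W = -Real.log c - ent (W x) := by
  have hterm : ∀ y, W x y * Real.log (W x y / c) = W x y * Real.log (W x y) - W x y * Real.log c := by
    intro y
    rcases eq_or_ne (W x y) 0 with h | h
    · simp [h]
    · rw [Real.log_div h hc]
      ring
  simp only [perInput, hout, hterm, sum_sub_distrib, ← sum_mul, hrow, ent]
  ring

theorem sum_col_eq_card_div_card {ι κ : Type*} [Fintype κ] {W : ι → κ → ℝ} {S : Finset ι}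
    (hrow : ∀ x ∈ S, ∑ y, W x y = 1) (hcol : ∀ y y', ∑ x ∈ S, W x y = ∑ x ∈ S, W x y')
    (y : κ) : ∑ x ∈ S, W x y = S.card / Fintype.card κ := by
  have : Nonempty κ := ⟨y⟩
  have hκ : (Fintype.card κ : ℝ) ≠ 0 := Nat.cast_ne_zero.mpr Fintype.card_ne_zero
  have htotal : ∑ y', ∑ x ∈ S, W x y' = S.card := by
    rw [sum_comm, sum_congr rfl hrow, sum_const, nsmul_one]
  rw [sum_congr rfl (fun y' _ => hcol y' y), sum_const, card_univ, nsmul_eq_mul] at htotal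
  rw [eq_div_iff hκ, ← htotal, mul_comm]

/-- The input distribution `P_α`. -/
noncomputable def mixedInput (r : ℕ) (α : ℝ) (x : Fin (r + 3)) : ℝ :=
  if x = 0 then α else (1 - α) / ((r : ℝ) + 2)

theorem card_univ_erase_zero (r : ℕ) : (univ.erase (0 : Fin (r + 3))).card = r + 2 := by
  simp

theorem sum_mixedInput_mul {r : ℕ} (α : ℝ) (f : Fin (r + 3) → ℝ) :
    ∑ x, mixedInput r α x * f x = α * f 0 + (1 - α) / ((r : ℝ) + 2) * ∑ x ∈ univ.erase 0, f x := by
  rw [← add_sum_erase _ (fun x => mixedInput r α x * f x) (mem_univ 0), mul_sum]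
  refine congrArg₂ (· + ·) (by simp [mixedInput]) (sum_congr rfl fun x hx => ?_)
  simp [mixedInput, ne_of_mem_erase hx]

theorem outDist_mixedInput {r s : ℕ} {W : Fin (r + 3) → Fin (s + 2) → ℝ} (hW : PTTOneWay W)
    (α : ℝ) (y : Fin (s + 2)) : outDist (mixedInput r α) W y = 1 / ((s : ℝ) + 2) := by
  obtain ⟨-, hrow, hunif, -, hcol⟩ := hW
  simp only [filter_ne'] at hcol
  have hcol' := sum_col_eq_card_div_card (fun x _ => hrow x) hcol y
  rw [card_univ_erase_zero, Fintype.card_fin] at hcol'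
  rw [outDist, sum_mixedInput_mul, hunif, hcol']
  push_cast
  field_simp
  ring

theorem stmt6_general (r s : ℕ) (W : Fin (r + 3) → Fin (s + 2) → ℝ) (hW : PTTOneWay W)
    (α : ℝ) :
    mutInfo (fun x : Fin (r + 3) => if x = 0 then α else (1 - α) / ((r : ℝ) + 2)) W =
      (1 - α) * (Real.log ((s : ℝ) + 2) - ent (fun y => W 1 y)) := by
  have ⟨_, hrow, hunif, hperm, _⟩ := hW
  have hc : 1 / ((s : ℝ) + 2) ≠ 0 := by positivity
  have hinput : ∀ x, perInput x (mixedInput r α) W = Real.log ((s : ℝ) + 2) - ent (W x) := by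
    intro x
    rw [perInput_of_outDist_eq_const (hrow x) (outDist_mixedInput hW α) hc, one_div, log_inv,
      neg_neg]
  have hzero : perInput 0 (mixedInput r α) W = 0 := by
    have hrow0 : W 0 = fun _ => 1 / (((s + 2 : ℕ) : ℝ)) := funext fun y => by
      rw [hunif y]; push_cast; rfl
    rw [hinput, hrow0, ent_uniform]
    push_cast
    ring
  have hnonzero : ∀ x ∈ univ.erase 0, perInput x (mixedInput r α) W =
      Real.log ((s : ℝ) + 2) - ent (fun y => W 1 y) := by
    intro x hx
    obtain ⟨σ, hσ⟩ := hperm x (ne_of_mem_erase hx)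
    rw [hinput, show W x = fun y => W 1 (σ y) from funext hσ, ent_comp_perm]
  change mutInfo (mixedInput r α) W = _
  rw [mutInfo_eq_sum_mul_perInput, sum_mixedInput_mul, hzero, sum_congr rfl hnonzero, sum_const,
    card_univ_erase_zero, nsmul_eq_mul]
  push_cast
  field_simp
  ring

/-- For `P_α` with mass `α` on input `0` and uniform on nonzero inputs,
`I(P_α;W) = (1 − α) C*` where `C* = log s − H(W(1,·))`. -/
theorem stmt6 (r s : ℕ) (W : Fin (r + 3) → Fin (s + 2) → ℝ) (hW : PTTOneWay W)
    (α : ℝ) (hα0 : 0 ≤ α) (hα1 : α ≤ 1) :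
    mutInfo (fun x : Fin (r + 3) => if x = 0 then α else (1 - α) / ((r : ℝ) + 2)) W =
      (1 - α) * (Real.log ((s : ℝ) + 2) - ent (fun y => W 1 y)) :=
  stmt6_general r s W hW α
end
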